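/- arXiv:1504.08185 — 3 statements merged into one kernel-verified Lean document; each statement's English description precedes it below -/
import Mathlib

section
/- Let R be a commutative ring. Every formal power series f ∈ 1 + tR[[t]] admits a unique expression f = ∏_{n≥1} (1 − a_n t^n) with a_n ∈ R, where the infinite product converges in the t-adic topology. -/
/-!
Expanding `∏_{k < n} (1 - a_k t^k) · (1 - a_n t^n)` changes the coefficient of `t^n` by `-a_n`
(the earlier product has constant term `1`) and leaves lower coefficients alone. Hence matching
`f` modulo `t^{n+1}` forces `a_n = [t^n] (∏_{k < n} (1 - a_k t^k) - f)`, a recursion which has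
exactly one solution.
-/

open PowerSeries Finset

namespace PowerSeries

variable {R : Type*} [CommRing R]

theorem X_pow_succ_dvd_iff {n : ℕ} {g : R⟦X⟧} :
    (X : R⟦X⟧) ^ (n + 1) ∣ g ↔ X ^ n ∣ g ∧ coeff n g = 0 := by
  simp only [X_pow_dvd_iff, Nat.lt_succ_iff_lt_or_eq, or_imp, forall_and, forall_eq]

theorem X_pow_succ_dvd_sub_mul_one_sub_iff {f P : R⟦X⟧} {n : ℕ} {a : R}
    (hP : constantCoeff P = 1) (h : X ^ n ∣ f - P) :
    X ^ (n + 1) ∣ f - P * (1 - C a * X ^ n) ↔ a = coeff n (P - f) := by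
  have hsplit : f - P * (1 - C a * X ^ n) = (f - P) + X ^ n * (C a * P) := by ring
  have hcoeff : coeff n (X ^ n * (C a * P)) = a := by
    rw [coeff_X_pow_mul', if_pos le_rfl, Nat.sub_self, coeff_zero_eq_constantCoeff, map_mul,
      constantCoeff_C, hP, mul_one]
  rw [X_pow_succ_dvd_iff, hsplit, and_iff_right (dvd_add h (dvd_mul_right _ _)), map_add, hcoeff,
    ← neg_sub, map_neg, neg_add_eq_zero, eq_comm]

noncomputable def eulerProd (a : ℕ → R) (N : ℕ) : R⟦X⟧ :=
  ∏ n ∈ range N, (1 - C (a n) * X ^ n)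

theorem eulerProd_zero (a : ℕ → R) : eulerProd a 0 = 1 := prod_range_zero _

theorem eulerProd_succ (a : ℕ → R) (N : ℕ) :
    eulerProd a (N + 1) = eulerProd a N * (1 - C (a N) * X ^ N) :=
  prod_range_succ _ _

theorem eulerProd_congr {a b : ℕ → R} {N : ℕ} (h : ∀ n < N, a n = b n) :
    eulerProd a N = eulerProd b N :=
  prod_congr rfl fun n hn => by rw [h n (mem_range.mp hn)]

theorem constantCoeff_eulerProd {a : ℕ → R} (h0 : a 0 = 0) (N : ℕ) :
    constantCoeff (eulerProd a N) = 1 := by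
  rw [eulerProd, map_prod]
  refine prod_eq_one fun n _ => ?_
  cases n <;> simp [h0]

theorem forall_X_pow_dvd_sub_eulerProd_iff {f : R⟦X⟧} (hf : constantCoeff f = 1)
    {a : ℕ → R} :
    (a 0 = 0 ∧ ∀ N, X ^ (N + 1) ∣ f - eulerProd a (N + 1)) ↔
      ∀ n, a n = coeff n (eulerProd a n - f) := by
  have hzero : coeff 0 (eulerProd a 0 - f) = 0 := by
    rw [eulerProd_zero, coeff_zero_eq_constantCoeff, map_sub, hf, map_one, sub_self]
  constructor
  · rintro ⟨h0, h⟩ (_ | n)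
    · rw [hzero, h0]
    · rw [← X_pow_succ_dvd_sub_mul_one_sub_iff (constantCoeff_eulerProd h0 _) (h n),
        ← eulerProd_succ]
      exact h (n + 1)
  · intro h
    have h0 : a 0 = 0 := (h 0).trans hzero
    refine ⟨h0, fun N => ?_⟩
    induction N with
    | zero =>
      rw [zero_add, pow_one, X_dvd_iff, eulerProd_succ, eulerProd_zero, h0]
      simp [hf]
    | succ N ih =>
      rw [eulerProd_succ, X_pow_succ_dvd_sub_mul_one_sub_iff (constantCoeff_eulerProd h0 _) ih]
      exact h (N + 1)

theorem eq_of_eq_coeff_eulerProd_sub {f : R⟦X⟧} {a b : ℕ → R}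
    (ha : ∀ n, a n = coeff n (eulerProd a n - f))
    (hb : ∀ n, b n = coeff n (eulerProd b n - f)) :
    a = b := by
  funext n
  induction n using Nat.strong_induction_on with
  | _ n ih => rw [ha, hb, eulerProd_congr ih]

-- Carrying the partial product along makes the recursion for the coefficients structural.
noncomputable def eulerPartialProd (f : R⟦X⟧) : ℕ → R⟦X⟧
  | 0 => 1
  | n + 1 => eulerPartialProd f n * (1 - C (coeff n (eulerPartialProd f n - f)) * X ^ n)

noncomputable def eulerCoeff (f : R⟦X⟧) (n : ℕ) : R :=
  coeff n (eulerPartialProd f n - f)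

theorem eulerProd_eulerCoeff (f : R⟦X⟧) (n : ℕ) :
    eulerProd (eulerCoeff f) n = eulerPartialProd f n := by
  induction n with
  | zero => exact eulerProd_zero _
  | succ n ih => rw [eulerProd_succ, ih, eulerPartialProd, eulerCoeff]

theorem eulerCoeff_eq (f : R⟦X⟧) (n : ℕ) :
    eulerCoeff f n = coeff n (eulerProd (eulerCoeff f) n - f) := by
  rw [eulerProd_eulerCoeff, eulerCoeff]

end PowerSeries

theorem stmt_1 (R : Type*) [CommRing R] (f : PowerSeries R)
    (hf : PowerSeries.constantCoeff f = 1) :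
    ∃! a : ℕ → R, a 0 = 0 ∧ ∀ N : ℕ,
      f - ∏ n ∈ Finset.range (N + 1), (1 - PowerSeries.C (a n) * PowerSeries.X ^ n)
        ∈ Ideal.span {(PowerSeries.X : PowerSeries R) ^ (N + 1)} := by
  simp_rw [Ideal.mem_span_singleton]
  change ∃! a : ℕ → R, a 0 = 0 ∧ ∀ N, X ^ (N + 1) ∣ f - eulerProd a (N + 1)
  simp_rw [forall_X_pow_dvd_sub_eulerProd_iff hf]
  exact ⟨eulerCoeff f, eulerCoeff_eq f,
    fun b hb => eq_of_eq_coeff_eulerProd_sub hb (eulerCoeff_eq f)⟩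
end

section
/- Let R be a commutative ring, r ≥ 1, a ∈ R, n ≥ 1, and s = gcd(r, n). The r-th Frobenius on big Witt vectors sends the class of 1 − at^n to the class of (1 − a^{r/s} t^{n/s})^s. -/
/-!
Big Witt vectors are not in Mathlib; we represent `W(R)` by the group
`1 + tR[[t]]` (addition = multiplication of power series).  The `r`-th Frobenius is
characterized as a family of operations, functorial in the ring, preserving constant
term 1, and acting on ghost components (defined via the logarithmic derivative) by
`gh_m(F_r f) = gh_{rm}(f)`.

By naturality it suffices to treat the universal case `a = x` in `ℤ[x]`. That ring is
additively torsion-free, so a series with constant term 1 is determined by its ghost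
components: the quotient of two series with the same ghost components has vanishing
logarithmic derivative, hence is constant. The ghost components of `1 - b t^d` are
`d b^{m/d}` when `d ∣ m` and `0` otherwise, and writing `r = e s`, `n = d s` with `e, d`
coprime, `n ∣ r m` holds exactly when `d ∣ m`; this makes the ghost components of
`F_r(1 - x t^n)` and of `(1 - x^e t^d)^s` agree.
-/

/-- The `n`-th ghost component: `gh n f = -(coefficient of t^n in t·f'·f⁻¹)`. -/
noncomputable def ghostCoeff {R : Type*} [CommRing R] (n : ℕ) (f : PowerSeries R) : R :=
  - PowerSeries.coeff n (PowerSeries.X * f.derivativeFun * f.invOfUnit 1)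

universe u

open PowerSeries

namespace PowerSeries

variable {R : Type*} [CommRing R]

theorem invOfUnit_one_eq_of_mul_eq_one {f g : R⟦X⟧} (hf : constantCoeff f = 1) (h : f * g = 1) :
    f.invOfUnit 1 = g :=
  left_inv_eq_right_inv (invOfUnit_mul f 1 (by rw [hf, Units.val_one])) h

noncomputable def xLogDeriv (f : R⟦X⟧) : R⟦X⟧ :=
  X * d⁄dX R f * f.invOfUnit 1

theorem constantCoeff_xLogDeriv (f : R⟦X⟧) : constantCoeff (xLogDeriv f) = 0 := by
  simp [xLogDeriv]

theorem xLogDeriv_mul_self {f : R⟦X⟧} (hf : constantCoeff f = 1) :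
    xLogDeriv f * f = X * d⁄dX R f := by
  rw [xLogDeriv, mul_assoc, invOfUnit_mul f 1 (by rw [hf, Units.val_one]), mul_one]

theorem xLogDeriv_mul {f g : R⟦X⟧} (hf : constantCoeff f = 1) (hg : constantCoeff g = 1) :
    xLogDeriv (f * g) = xLogDeriv f + xLogDeriv g := by
  have hfi := mul_invOfUnit f 1 (by rw [hf, Units.val_one])
  have hgi := mul_invOfUnit g 1 (by rw [hg, Units.val_one])
  have hinv : (f * g).invOfUnit 1 = f.invOfUnit 1 * g.invOfUnit 1 :=
    invOfUnit_one_eq_of_mul_eq_one (by rw [map_mul, hf, hg, mul_one]) <| by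
      rw [mul_mul_mul_comm, hfi, hgi, mul_one]
  rw [xLogDeriv, xLogDeriv, xLogDeriv, hinv, Derivation.leibniz, smul_eq_mul, smul_eq_mul]
  linear_combination (X * d⁄dX R g * g.invOfUnit 1) * hfi + (X * d⁄dX R f * f.invOfUnit 1) * hgi

theorem xLogDeriv_one : xLogDeriv (1 : R⟦X⟧) = 0 := by
  simp [xLogDeriv]

noncomputable def geomSeries (d : ℕ) (b : R) : R⟦X⟧ :=
  mk fun k => if d ∣ k then b ^ (k / d) else 0

theorem C_mul_X_pow_mul_geomSeries {d : ℕ} (hd : 0 < d) (b : R) :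
    C b * X ^ d * geomSeries d b = geomSeries d b - 1 := by
  ext m
  rw [mul_comm (C b), mul_assoc, coeff_X_pow_mul', coeff_C_mul, map_sub, coeff_one, geomSeries,
    coeff_mk, coeff_mk]
  rcases lt_or_ge m d with hmd | hdm
  · have hdvd : d ∣ m ↔ m = 0 :=
      ⟨fun h => Nat.eq_zero_of_dvd_of_lt h hmd, by rintro rfl; exact dvd_zero d⟩
    by_cases hm : m = 0 <;> simp [hmd.not_ge, hdvd, hm, hd.ne']
  · obtain ⟨k, rfl⟩ := Nat.exists_eq_add_of_le hdm
    simp [Nat.dvd_add_self_left, Nat.add_div_left k hd, pow_succ', hd.ne']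

theorem one_sub_C_mul_X_pow_mul_geomSeries {d : ℕ} (hd : 0 < d) (b : R) :
    (1 - C b * X ^ d) * geomSeries d b = 1 := by
  rw [sub_mul, one_mul, C_mul_X_pow_mul_geomSeries hd, sub_sub_cancel]

theorem constantCoeff_one_sub_C_mul_X_pow {d : ℕ} (hd : 0 < d) (b : R) :
    constantCoeff (1 - C b * X ^ d) = 1 := by
  simp [hd.ne']

theorem xLogDeriv_one_sub_C_mul_X_pow {d : ℕ} (hd : 0 < d) (b : R) :
    xLogDeriv (1 - C b * X ^ d) = -(C (d : R) * (geomSeries d b - 1)) := by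
  have hX : X * d⁄dX R (1 - C b * X ^ d) = -(C (d : R) * (C b * X ^ d)) := by
    obtain ⟨k, rfl⟩ := Nat.exists_eq_add_one_of_ne_zero hd.ne'
    simp
    ring
  rw [xLogDeriv, hX, invOfUnit_one_eq_of_mul_eq_one (constantCoeff_one_sub_C_mul_X_pow hd b)
    (one_sub_C_mul_X_pow_mul_geomSeries hd b), ← C_mul_X_pow_mul_geomSeries hd]
  ring

end PowerSeries

section

variable {R : Type*} [CommRing R]

theorem ghostCoeff_eq_neg_coeff_xLogDeriv (n : ℕ) (f : R⟦X⟧) :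
    ghostCoeff n f = -coeff n (xLogDeriv f) :=
  rfl

theorem ghostCoeff_mul {f g : R⟦X⟧} (hf : constantCoeff f = 1) (hg : constantCoeff g = 1)
    (n : ℕ) : ghostCoeff n (f * g) = ghostCoeff n f + ghostCoeff n g := by
  simp only [ghostCoeff_eq_neg_coeff_xLogDeriv, xLogDeriv_mul hf hg, map_add, neg_add]

theorem ghostCoeff_pow {f : R⟦X⟧} (hf : constantCoeff f = 1) (s n : ℕ) :
    ghostCoeff n (f ^ s) = s * ghostCoeff n f := by
  induction s with
  | zero => simp [ghostCoeff_eq_neg_coeff_xLogDeriv, xLogDeriv_one]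
  | succ k ih =>
    rw [pow_succ, ghostCoeff_mul (by rw [map_pow, hf, one_pow]) hf, ih]
    push_cast
    ring

theorem ghostCoeff_one_sub_C_mul_X_pow {d m : ℕ} (hd : 0 < d) (hm : 0 < m) (b : R) :
    ghostCoeff m (1 - C b * X ^ d) = if d ∣ m then d * b ^ (m / d) else 0 := by
  rw [ghostCoeff_eq_neg_coeff_xLogDeriv, xLogDeriv_one_sub_C_mul_X_pow hd, map_neg, neg_neg,
    coeff_C_mul, map_sub, coeff_one, if_neg hm.ne', sub_zero, geomSeries, coeff_mk, mul_ite,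
    mul_zero]

theorem ghostCoeff_one_sub_C_pow_mul_X_pow_pow {e d s m : ℕ} (hed : e.Coprime d) (he : 0 < e)
    (hd : 0 < d) (hs : 0 < s) (hm : 0 < m) (b : R) :
    ghostCoeff m ((1 - C (b ^ e) * X ^ d) ^ s) =
      ghostCoeff (e * s * m) (1 - C b * X ^ (d * s)) := by
  rw [ghostCoeff_pow (constantCoeff_one_sub_C_mul_X_pow hd _), ghostCoeff_one_sub_C_mul_X_pow hd hm,
    ghostCoeff_one_sub_C_mul_X_pow (by positivity) (by positivity)]
  have hdvd : d * s ∣ e * s * m ↔ d ∣ m := by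
    rw [mul_right_comm, Nat.mul_dvd_mul_iff_right hs, hed.symm.dvd_mul_left]
  simp only [hdvd]
  split_ifs with hdm
  · obtain ⟨k, rfl⟩ := hdm
    have hq : e * s * (d * k) / (d * s) = e * k := by
      rw [Nat.div_eq_iff_eq_mul_left (by positivity) ⟨e * k, by ring⟩]
      ring
    rw [hq, Nat.mul_div_cancel_left k hd, ← pow_mul]
    push_cast
    ring
  · rw [mul_zero]

theorem eq_of_ghostCoeff_eq [IsAddTorsionFree R] {f g : R⟦X⟧} (hf : constantCoeff f = 1)
    (hg : constantCoeff g = 1) (h : ∀ m, 0 < m → ghostCoeff m f = ghostCoeff m g) : f = g := by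
  have hL : xLogDeriv f = xLogDeriv g := by
    ext m
    rcases Nat.eq_zero_or_pos m with rfl | hm
    · simp only [coeff_zero_eq_constantCoeff_apply, constantCoeff_xLogDeriv]
    · simpa only [ghostCoeff_eq_neg_coeff_xLogDeriv, neg_inj] using h m hm
  set q := f * g.invOfUnit 1
  have hq : constantCoeff q = 1 := by
    simp [q, hf]
  have hqg : q * g = f := by
    rw [mul_assoc, invOfUnit_mul g 1 (by rw [hg, Units.val_one]), mul_one]
  have hLq : xLogDeriv q = 0 := by
    have := xLogDeriv_mul hq hg
    rwa [hqg, hL, right_eq_add] at this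
  have hdq : d⁄dX R q = 0 :=
    X_mul_cancel (by rw [← xLogDeriv_mul_self hq, hLq, zero_mul, mul_zero])
  have hq1 : q = 1 := derivative.ext (by rw [hdq, derivative_one]) (by rw [hq, map_one])
  rw [← hqg, hq1, one_mul]

theorem eq_one_sub_C_mul_X_pow_pow_of_ghostCoeff [IsAddTorsionFree R] {r n : ℕ} (hr : 0 < r)
    (hn : 0 < n) (b : R) {f : R⟦X⟧} (hf : constantCoeff f = 1)
    (h : ∀ m, 0 < m → ghostCoeff m f = ghostCoeff (r * m) (1 - C b * X ^ n)) :
    f = (1 - C (b ^ (r / r.gcd n)) * X ^ (n / r.gcd n)) ^ r.gcd n := by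
  obtain ⟨e, d, hed, hre, hnd⟩ := Nat.exists_coprime r n
  set s := r.gcd n
  have hs : 0 < s := Nat.gcd_pos_of_pos_right r hn
  have he : 0 < e := Nat.pos_of_mul_pos_right (hre ▸ hr)
  have hd : 0 < d := Nat.pos_of_mul_pos_right (hnd ▸ hn)
  rw [hre, hnd, Nat.mul_div_cancel _ hs, Nat.mul_div_cancel _ hs]
  refine eq_of_ghostCoeff_eq hf (by rw [map_pow, constantCoeff_one_sub_C_mul_X_pow hd, one_pow])
    fun m hm => ?_
  rw [h m hm, ghostCoeff_one_sub_C_pow_mul_X_pow_pow hed he hd hs hm, ← hre, ← hnd]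

end

theorem stmt_6 (R : Type u) [CommRing R]
    (F : ∀ (A : Type u) [CommRing A], ℕ → PowerSeries A → PowerSeries A)
    (hFone : ∀ (A : Type u) [CommRing A] (r : ℕ) (f : PowerSeries A), 1 ≤ r →
      PowerSeries.constantCoeff f = 1 → PowerSeries.constantCoeff (F A r f) = 1)
    (hFghost : ∀ (A : Type u) [CommRing A] (r : ℕ) (f : PowerSeries A), 1 ≤ r →
      PowerSeries.constantCoeff f = 1 →
      ∀ m : ℕ, 1 ≤ m → ghostCoeff m (F A r f) = ghostCoeff (r * m) f)
    (hFnat : ∀ (A B : Type u) [CommRing A] [CommRing B] (φ : A →+* B) (r : ℕ)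
      (f : PowerSeries A), 1 ≤ r → PowerSeries.constantCoeff f = 1 →
      PowerSeries.map φ (F A r f) = F B r (PowerSeries.map φ f))
    (r n s : ℕ) (hr : 1 ≤ r) (hn : 1 ≤ n) (hs : s = Nat.gcd r n) (a : R) :
    F R r (1 - PowerSeries.C a * PowerSeries.X ^ n)
      = (1 - PowerSeries.C (a ^ (r / s)) * PowerSeries.X ^ (n / s)) ^ s := by
  subst hs
  let A := MvPolynomial PUnit.{u + 1} ℤ
  let x : A := MvPolynomial.X PUnit.unit
  let ψ : A →+* R := MvPolynomial.eval₂Hom (Int.castRingHom R) fun _ => a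
  have hψx : ψ x = a := MvPolynomial.eval₂Hom_X' _ _ _
  have hx := constantCoeff_one_sub_C_mul_X_pow hn x
  have huniv := eq_one_sub_C_mul_X_pow_pow_of_ghostCoeff hr hn x (hFone A r _ hr hx)
    (hFghost A r _ hr hx)
  have := congrArg (map ψ) huniv
  rw [hFnat A R ψ r _ hr hx] at this
  simpa [hψx] using this
end

section
/- Let R be a unique factorization domain and let P ⊂ R[t] be a prime ideal of height one such that P + (t) = R[t]. Then P is generated by a polynomial of the form 1 − t·f(t) for some f(t) ∈ R[t]. -/
/-!
A nonzero prime of a UFD contains a prime element `q`, and `(q)` is then a nonzero prime inside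
`P`, so height one forces `P = (q)`. Evaluating a Bézout relation `a q + b t = 1` at `t = 0`
shows that `q(0)` is a unit; rescaling `q` by the inverse unit makes its constant term `1`, i.e.
puts it in the form `1 - t f(t)`.
-/

open Polynomial

theorem Ideal.IsPrime.exists_eq_span_singleton_of_forall_lt_eq_bot {A : Type*} [CommRing A]
    [IsDomain A] [UniqueFactorizationMonoid A] {P : Ideal A} (hP : P.IsPrime) (hne : P ≠ ⊥)
    (hht : ∀ Q : Ideal A, Q.IsPrime → Q < P → Q = ⊥) : ∃ q : A, P = Ideal.span {q} := by
  obtain ⟨q, hqP, hq⟩ := hP.exists_mem_prime_of_ne_bot hne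
  refine ⟨q, ((Ideal.span_singleton_le_iff_mem P).mpr hqP).eq_or_lt.elim Eq.symm fun hlt => ?_⟩
  have hbot := hht _ ((Ideal.span_singleton_prime hq.ne_zero).mpr hq) hlt
  exact absurd (Ideal.span_singleton_eq_bot.mp hbot) hq.ne_zero

namespace Polynomial

variable {R : Type*} [CommRing R]

theorem isUnit_eval_zero_of_span_sup_span_X_eq_top {q : R[X]}
    (h : Ideal.span {q} ⊔ Ideal.span {X} = ⊤) : IsUnit (q.eval 0) := by
  have hqX : IsCoprime q X :=
    (Ideal.isCoprime_span_singleton_iff q X).mp (Ideal.isCoprime_iff_sup_eq.mpr h)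
  exact isCoprime_zero_right.mp (by simpa using hqX.map (evalRingHom 0))

theorem exists_span_singleton_eq_span_one_sub_X_mul {q : R[X]} (hq : IsUnit (q.eval 0)) :
    ∃ f : R[X], Ideal.span {q} = Ideal.span {1 - X * f} := by
  obtain ⟨u, hu⟩ := hq
  have hX : X ∣ 1 - C (↑u⁻¹ : R) * q := by
    rw [X_dvd_iff, coeff_zero_eq_eval_zero]
    simp [← hu]
  obtain ⟨f, hf⟩ := hX
  refine ⟨f, ?_⟩
  rw [← hf, sub_sub_cancel]
  exact (Ideal.span_singleton_mul_left_unit (isUnit_C.mpr u⁻¹.isUnit) q).symm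

end Polynomial

theorem stmt_10 (R : Type*) [CommRing R] [IsDomain R] [UniqueFactorizationMonoid R]
    (P : Ideal (Polynomial R)) (hP : P.IsPrime)
    (hne : P ≠ ⊥) (hht : ∀ Q : Ideal (Polynomial R), Q.IsPrime → Q < P → Q = ⊥)
    (hco : P ⊔ Ideal.span {(Polynomial.X : Polynomial R)} = ⊤) :
    ∃ f : Polynomial R, P = Ideal.span {1 - Polynomial.X * f} := by
  obtain ⟨q, rfl⟩ := hP.exists_eq_span_singleton_of_forall_lt_eq_bot hne hht
  exact exists_span_singleton_eq_span_one_sub_X_mul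
    (isUnit_eval_zero_of_span_sup_span_X_eq_top hco)
end
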